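/- Let α > 0 and let m, k be real numbers with k ≥ 2 and m > k + 1. Then for every r > 0: −f″(r)/f(r) + (m − 1)·(1 − f′(r)²)/f(r)² − k·f′(r)·G′(r)/(f(r)·G(r)) − f′(r)·h′(r)/(f(r)·h(r)) > 0, where f(r) = r·(1+r²)^(−1/4), G(r) = r/arctan r, and h(r) = (1+r²)^(−α/2). -/

import Mathlib

noncomputable def f (r : ℝ) : ℝ := r * (1 + r ^ 2) ^ (-(1 / 4 : ℝ))

noncomputable def G (r : ℝ) : ℝ := r / Real.arctan r

noncomputable def h (α r : ℝ) : ℝ := (1 + r ^ 2) ^ (-(α / 2))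

/-!
Everything is expressed through logarithmic derivatives. With `u = 1 + r²` one computes
`f'/f = (2 + r²)/(2ru)`, `f''/f = -(6 + r²)/(4u²)` and `h'/h = -αr/u`, while
`G'/G = 1/r - 1/(u · arctan r) < r/u` because `arctan r < r`. The heart of the matter is
`(1 - f'²)/f² ≥ (f'/f) · r/u`; since `f² = r²/√u`, putting `t = √u ≥ 1` turns it into
`(1 + t²)(3t² - 1) ≤ 4t⁵`. As `k < m - 1`, the `G`-term is then dominated by the
`(m - 1)`-term, and the remaining two terms are positive.
-/

open Real

lemma arctan_lt_self_of_pos {x : ℝ} (hx : 0 < x) : arctan x < x := by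
  simpa only [tan_arctan] using lt_tan (arctan_pos.2 hx) (arctan_lt_pi_div_two x)

lemma hasDerivAt_one_add_sq_rpow (p r : ℝ) :
    HasDerivAt (fun x : ℝ => (1 + x ^ 2) ^ p) (2 * r * p * (1 + r ^ 2) ^ (p - 1)) r := by
  have hu : HasDerivAt (fun x : ℝ => 1 + x ^ 2) (2 * r) r := by
    simpa using (hasDerivAt_pow 2 r).const_add 1
  convert hu.rpow_const (p := p) (Or.inl (by positivity)) using 1

lemma logDeriv_one_add_sq_rpow (p r : ℝ) :
    logDeriv (fun x : ℝ => (1 + x ^ 2) ^ p) r = 2 * p * r / (1 + r ^ 2) := by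
  have hu : 1 + r ^ 2 ≠ 0 := by positivity
  rw [logDeriv_apply, (hasDerivAt_one_add_sq_rpow p r).deriv, rpow_sub_one hu]
  field_simp

lemma hasDerivAt_f (r : ℝ) :
    HasDerivAt f ((1 + r ^ 2 / 2) * (1 + r ^ 2) ^ (-(1 / 4 : ℝ) - 1)) r := by
  have hu : 1 + r ^ 2 ≠ 0 := by positivity
  refine ((hasDerivAt_id' r).mul (hasDerivAt_one_add_sq_rpow (-(1 / 4)) r)).congr_deriv ?_
  rw [rpow_sub_one hu]
  field_simp
  ring

lemma deriv_f : deriv f = fun r => (1 + r ^ 2 / 2) * (1 + r ^ 2) ^ (-(1 / 4 : ℝ) - 1) :=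
  funext fun r => (hasDerivAt_f r).deriv

lemma logDeriv_f {r : ℝ} (hr : r ≠ 0) : logDeriv f r = (2 + r ^ 2) / (2 * r * (1 + r ^ 2)) := by
  have hu : 1 + r ^ 2 ≠ 0 := by positivity
  have hP : (1 + r ^ 2) ^ (-(1 / 4 : ℝ)) ≠ 0 := by positivity
  rw [logDeriv_apply, (hasDerivAt_f r).deriv, f, rpow_sub_one hu]
  field_simp

lemma deriv_deriv_f_div_f {r : ℝ} (hr : r ≠ 0) :
    deriv (deriv f) r / f r = -(6 + r ^ 2) / (4 * (1 + r ^ 2) ^ 2) := by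
  have hu : 1 + r ^ 2 ≠ 0 := by positivity
  have hP : (1 + r ^ 2) ^ (-(1 / 4 : ℝ)) ≠ 0 := by positivity
  have hf' : HasDerivAt (fun x : ℝ => 1 + x ^ 2 / 2) r r := by
    simpa using ((hasDerivAt_pow 2 r).div_const 2).const_add 1
  have hf'' := hf'.fun_mul (hasDerivAt_one_add_sq_rpow (-(1 / 4) - 1) r)
  rw [deriv_f, hf''.deriv, f]
  simp only [rpow_sub_one hu]
  field_simp
  ring

lemma f_sq (r : ℝ) : f r ^ 2 = r ^ 2 / √(1 + r ^ 2) := by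
  have hu : (0 : ℝ) ≤ 1 + r ^ 2 := by positivity
  have hP : ((1 + r ^ 2) ^ (-(1 / 4 : ℝ))) ^ 2 = (√(1 + r ^ 2))⁻¹ := by
    rw [sqrt_eq_rpow, ← rpow_neg hu, ← rpow_mul_natCast hu]
    norm_num
  rw [f, mul_pow, hP, div_eq_mul_inv]

lemma logDeriv_G_lt {r : ℝ} (hr : 0 < r) : logDeriv G r < r / (1 + r ^ 2) := by
  have ha : 0 < arctan r := arctan_pos.2 hr
  have hG : HasDerivAt G ((1 * arctan r - r * (1 / (1 + r ^ 2))) / arctan r ^ 2) r :=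
    (hasDerivAt_id r).div (hasDerivAt_arctan r) ha.ne'
  rw [logDeriv_apply, hG.deriv, G, div_lt_div_iff₀ (by positivity) (by positivity)]
  have harctan := arctan_lt_self_of_pos hr
  field_simp
  linarith

lemma logDeriv_h (α r : ℝ) : logDeriv (h α) r = -(α * r / (1 + r ^ 2)) := by
  rw [show h α = fun x : ℝ => (1 + x ^ 2) ^ (-(α / 2)) from rfl, logDeriv_one_add_sq_rpow]
  ring

lemma one_add_sq_mul_three_mul_sq_sub_one_le {t : ℝ} (ht : 1 ≤ t) :
    (1 + t ^ 2) * (3 * t ^ 2 - 1) ≤ 4 * t ^ 5 := by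
  nlinarith [sq_nonneg (t ^ 2 - 1), pow_le_pow_right₀ ht (show 4 ≤ 5 by norm_num)]

lemma logDeriv_f_mul_le {r : ℝ} (hr : 0 < r) :
    logDeriv f r * (r / (1 + r ^ 2)) ≤ (1 - deriv f r ^ 2) / f r ^ 2 := by
  have hf : f r ≠ 0 := by rw [f]; positivity
  have hsplit : (1 - deriv f r ^ 2) / f r ^ 2 = (f r ^ 2)⁻¹ - logDeriv f r ^ 2 := by
    rw [logDeriv_apply]
    field_simp
  rw [hsplit, logDeriv_f hr.ne', f_sq]
  have ht1 : 1 ≤ √(1 + r ^ 2) := one_le_sqrt.2 (by nlinarith)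
  have ht2 : √(1 + r ^ 2) ^ 2 = 1 + r ^ 2 := sq_sqrt (by positivity)
  set t := √(1 + r ^ 2)
  rw [← ht2]
  have hr2 : r ^ 2 = t ^ 2 - 1 := by linarith
  have hpoly := one_add_sq_mul_three_mul_sq_sub_one_le ht1
  field_simp
  rw [hr2]
  linarith

/-- Ricci curvature positivity in the `S^m` directions: if `k ≥ 2` and `m > k + 1`, then
`−f″/f + (m−1)(1−(f′)²)/f² − k·f′G′/(fG) − f′h′/(fh) > 0` for all `r > 0`. -/
theorem statement12 (α : ℝ) (hα : 0 < α) (m k : ℝ) (hk : 2 ≤ k) (hm : m > k + 1) :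
    ∀ r : ℝ, 0 < r →
      -(deriv (deriv f) r / f r)
        + (m - 1) * ((1 - (deriv f r) ^ 2) / (f r) ^ 2)
        - k * (deriv f r * deriv G r / (f r * G r))
        - deriv f r * deriv (h α) r / (f r * h α r) > 0 := by
  intro r hr
  simp only [mul_div_mul_comm, ← logDeriv_apply]
  rw [deriv_deriv_f_div_f hr.ne', logDeriv_h]
  have hL : 0 < logDeriv f r := by rw [logDeriv_f hr.ne']; positivity
  have hB := logDeriv_f_mul_le hr
  have hG : k * (logDeriv f r * logDeriv G r) < (m - 1) * ((1 - deriv f r ^ 2) / f r ^ 2) :=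
    calc k * (logDeriv f r * logDeriv G r) < k * (logDeriv f r * (r / (1 + r ^ 2))) := by
          gcongr; exact logDeriv_G_lt hr
      _ ≤ (m - 1) * ((1 - deriv f r ^ 2) / f r ^ 2) :=
          mul_le_mul (by linarith) hB (by positivity) (by linarith)
  have hh : 0 < logDeriv f r * (α * r / (1 + r ^ 2)) := by positivity
  have hf'' : 0 < (6 + r ^ 2) / (4 * (1 + r ^ 2) ^ 2) := by positivity
  linarith [neg_div (4 * (1 + r ^ 2) ^ 2) (6 + r ^ 2)]
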